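/- For every real q > 0, the free energy F(q) := lim_{n→∞} (1/n) log s_n(q) of ternary square-free words exists, is finite, equals inf_{n ≥ 1} (1/n) log s_n(q), and the function t ↦ F(e^t) is convex on ℝ (i.e. F is convex as a function of log q on (0,∞)). -/

import Mathlib

/-- A word `w` is square-free if whenever `w = x ++ y ++ y ++ z`,
then `y` is the empty word. -/
def SquareFree {α : Type*} (w : List α) : Prop :=
  ∀ x y z : List α, w = x ++ y ++ y ++ z → y = []

/-- `s2 n k` is the number of ternary square-free words of length `n`
containing exactly `k` occurrences of the letter `a` (here `0 : Fin 3`). -/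
noncomputable def s2 (n k : ℕ) : ℕ :=
  Nat.card {w : List (Fin 3) // w.length = n ∧ SquareFree w ∧ w.count 0 = k}

/-- The weighted counting polynomial `s_n(q) = Σ_{k=0}^{n} s_{n,k} q^k`. -/
noncomputable def sPoly (n : ℕ) (q : ℝ) : ℝ :=
  ∑ k ∈ Finset.range (n + 1), (s2 n k : ℝ) * q ^ k

/-!
By Fekete's lemma the free energy exists and equals `inf_n (1/n) log s_n(q)` as soon as
`n ↦ log s_n(q)` is subadditive and `(1/n) log s_n(q)` is bounded below. Subadditivity holds
because cutting a square-free word of length `m + n` after `m` letters injectively gives square-free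
words of lengths `m` and `n`, and the weight `q ^ #a` is multiplicative. The lower bound
`s_n(q) ≥ min(1, q)^n` needs one square-free ternary word of each length: Thue's word obtained by
coding the consecutive letters of the overlap-free Thue–Morse sequence. Finally
`t ↦ log s_n(e^t)` is a log-sum-exp, convex by Hölder's inequality, and a pointwise limit of
convex functions is convex.
-/

open Finset

/-- `HasPeriodOn f p i l`: the factor `f i, …, f (i + l + p - 1)` has period `p`; it is a square
when `l = p` and an overlap when `l = p + 1`. -/
def HasPeriodOn {α : Type*} (f : ℕ → α) (p i l : ℕ) : Prop :=
  ∀ j < l, f (i + j) = f (i + j + p)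

def thueMorse (n : ℕ) : Bool := decide ((Nat.digits 2 n).sum % 2 = 1)

theorem thueMorse_two_mul (n : ℕ) : thueMorse (2 * n) = thueMorse n := by
  rcases Nat.eq_zero_or_pos n with rfl | hn
  · rfl
  · simp [thueMorse, Nat.digits_def' one_lt_two (by omega : 0 < 2 * n)]

theorem thueMorse_two_mul_add_one (n : ℕ) : thueMorse (2 * n + 1) = !thueMorse n := by
  simp only [thueMorse, Nat.digits_def' one_lt_two (by omega : 0 < 2 * n + 1),
    show (2 * n + 1) / 2 = n by omega]
  rcases Nat.mod_two_eq_zero_or_one (Nat.digits 2 n).sum with h | h <;>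
    simp [List.sum_cons, Nat.add_mod, h]

theorem thueMorse_two_mul_add_eq_iff {a b r : ℕ} (hr : r < 2) :
    thueMorse (2 * a + r) = thueMorse (2 * b + r) ↔ thueMorse a = thueMorse b := by
  interval_cases r <;> simp [thueMorse_two_mul, thueMorse_two_mul_add_one]

theorem thueMorse_two_mul_eq_iff (a b : ℕ) :
    thueMorse (2 * a) = thueMorse (2 * b + 1) ↔ thueMorse b = !thueMorse a := by
  rw [thueMorse_two_mul, thueMorse_two_mul_add_one]
  cases thueMorse a <;> cases thueMorse b <;> simp

theorem thueMorse_not_cube (n : ℕ) :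
    ¬(thueMorse n = thueMorse (n + 1) ∧ thueMorse (n + 1) = thueMorse (n + 2)) := by
  rintro ⟨h₁, h₂⟩
  obtain ⟨m, rfl | rfl⟩ := Nat.even_or_odd' n
  · rw [thueMorse_two_mul, thueMorse_two_mul_add_one] at h₁
    cases thueMorse m <;> simp at h₁
  · rw [show 2 * m + 1 + 1 = 2 * (m + 1) by ring, show 2 * m + 1 + 2 = 2 * (m + 1) + 1 by ring,
      thueMorse_two_mul, thueMorse_two_mul_add_one] at h₂
    cases thueMorse (m + 1) <;> simp at h₂

theorem thueMorse_hasPeriodOn_half {q i : ℕ}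
    (h : HasPeriodOn thueMorse (2 * q) i (2 * q + 1)) :
    HasPeriodOn thueMorse q (i / 2) (q + 1) := by
  intro j hj
  have hj' := h (2 * j) (by omega)
  rwa [show i + 2 * j = 2 * (i / 2 + j) + i % 2 by omega,
    show 2 * (i / 2 + j) + i % 2 + 2 * q = 2 * (i / 2 + j + q) + i % 2 by ring,
    thueMorse_two_mul_add_eq_iff (Nat.mod_lt _ two_pos)] at hj'

theorem thueMorse_eq_add_odd_iff {a q r : ℕ} (hr : r < 2) :
    thueMorse (2 * a + r) = thueMorse (2 * a + r + (2 * q + 1)) ↔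
      thueMorse (a + q + r) = !thueMorse a := by
  interval_cases r
  · rw [show 2 * a + 0 + (2 * q + 1) = 2 * (a + q) + 1 by ring, add_zero, add_zero,
      thueMorse_two_mul_eq_iff]
  · rw [show 2 * a + 1 + (2 * q + 1) = 2 * (a + q + 1) by ring, eq_comm,
      thueMorse_two_mul_eq_iff]
    cases thueMorse a <;> cases thueMorse (a + q + 1) <;> simp

theorem thueMorse_not_hasPeriodOn_odd (q i : ℕ) :
    ¬HasPeriodOn thueMorse (2 * q + 1) i 4 := by
  intro h
  -- An odd shift swaps even and odd positions, so four consecutive positions of the window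
  -- give a cube of `thueMorse` one level down.
  have hflip : ∀ a r b, b = a + q + r → r < 2 → i ≤ 2 * a + r → 2 * a + r < i + 4 →
      thueMorse b = !thueMorse a := by
    rintro a r b rfl hr h₁ h₂
    rw [← thueMorse_eq_add_odd_iff hr]
    simpa [show i + (2 * a + r - i) = 2 * a + r by omega] using h (2 * a + r - i) (by omega)
  obtain ⟨m, rfl | rfl⟩ := Nat.even_or_odd' i
  · have e₀ : thueMorse (m + q) = !thueMorse m := by apply hflip m 0 <;> omega
    have e₁ : thueMorse (m + q + 1) = !thueMorse m := by apply hflip m 1 <;> omega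
    have e₂ : thueMorse (m + q + 1) = !thueMorse (m + 1) := by apply hflip (m + 1) 0 <;> omega
    have e₃ : thueMorse (m + q + 2) = !thueMorse (m + 1) := by apply hflip (m + 1) 1 <;> omega
    exact thueMorse_not_cube (m + q) ⟨e₀.trans e₁.symm, e₂.trans e₃.symm⟩
  · have e₀ : thueMorse (m + q + 1) = !thueMorse m := by apply hflip m 1 <;> omega
    have e₁ : thueMorse (m + q + 1) = !thueMorse (m + 1) := by apply hflip (m + 1) 0 <;> omega
    have e₂ : thueMorse (m + q + 2) = !thueMorse (m + 1) := by apply hflip (m + 1) 1 <;> omega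
    have e₃ : thueMorse (m + q + 2) = !thueMorse (m + 2) := by apply hflip (m + 2) 0 <;> omega
    refine thueMorse_not_cube m ⟨?_, ?_⟩
    · simpa using e₀.symm.trans e₁
    · simpa using e₂.symm.trans e₃

theorem thueMorse_overlapFree {p : ℕ} (hp : 0 < p) (i : ℕ) :
    ¬HasPeriodOn thueMorse p i (p + 1) := by
  induction p using Nat.strong_induction_on generalizing i with
  | _ p ih =>
  intro h
  obtain ⟨q, rfl | rfl⟩ := Nat.even_or_odd' p
  · exact ih q (by omega) (by omega) (i / 2) (thueMorse_hasPeriodOn_half h)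
  · rcases Nat.eq_zero_or_pos q with rfl | hq
    · exact thueMorse_not_cube i ⟨h 0 (by omega), h 1 (by omega)⟩
    · exact thueMorse_not_hasPeriodOn_odd q i fun j hj => h j (by omega)

/-- Up to renaming the letters, this is the ternary Thue–Morse word `t (n + 1) - t n + 1`. -/
def ternaryThueMorse (n : ℕ) : Fin 3 :=
  if thueMorse n = thueMorse (n + 1) then 2 else if thueMorse n then 1 else 0

theorem ternaryThueMorse_eq_two_iff (n : ℕ) :
    ternaryThueMorse n = 2 ↔ thueMorse n = thueMorse (n + 1) := by
  unfold ternaryThueMorse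
  split_ifs <;> simp_all

theorem thueMorse_eq_of_ternaryThueMorse_eq {m n : ℕ}
    (h : ternaryThueMorse m = ternaryThueMorse n) (h₂ : ternaryThueMorse n ≠ 2) :
    thueMorse m = thueMorse n := by
  unfold ternaryThueMorse at h h₂
  generalize thueMorse m = a, thueMorse (m + 1) = b, thueMorse n = c, thueMorse (n + 1) = d at *
  revert a b c d; decide

theorem thueMorse_succ_eq_iff_of_ternaryThueMorse_eq {m n : ℕ}
    (h : ternaryThueMorse m = ternaryThueMorse n) :
    thueMorse (m + 1) = thueMorse (n + 1) ↔ thueMorse m = thueMorse n := by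
  unfold ternaryThueMorse at h
  generalize thueMorse m = a, thueMorse (m + 1) = b, thueMorse n = c, thueMorse (n + 1) = d at *
  revert a b c d; decide

theorem ternaryThueMorse_squareFree {p : ℕ} (hp : 0 < p) (i : ℕ) :
    ¬HasPeriodOn ternaryThueMorse p i p := by
  intro h
  have hprop : ∀ j ≤ p, (thueMorse (i + j) = thueMorse (i + j + p) ↔
      thueMorse i = thueMorse (i + p)) := by
    intro j
    induction j with
    | zero => simp
    | succ j ih =>
      intro hj
      rw [← ih (by omega), ← add_assoc, show i + j + 1 + p = i + j + p + 1 by ring,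
        thueMorse_succ_eq_iff_of_ternaryThueMorse_eq (h j (by omega))]
  -- The two halves lift to equal halves of `thueMorse` (an overlap) or to complementary ones,
  -- which forces the code `2` on the whole first half, i.e. a constant run of `thueMorse`.
  by_cases hi : thueMorse i = thueMorse (i + p)
  · exact thueMorse_overlapFree hp i fun j hj => (hprop j (by omega)).2 hi
  have htwo : ∀ j < p, ternaryThueMorse (i + j) = 2 := fun j hj => by
    by_contra hne
    exact hi <| (hprop j hj.le).1 <| thueMorse_eq_of_ternaryThueMorse_eq (h j hj) (h j hj ▸ hne)
  have h₀ : thueMorse i = thueMorse (i + 1) := (ternaryThueMorse_eq_two_iff i).1 (htwo 0 hp)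
  rcases Nat.lt_or_ge p 2 with hp₂ | hp₂
  · exact hi (by rwa [show p = 1 by omega])
  · exact thueMorse_not_cube i ⟨h₀, (ternaryThueMorse_eq_two_iff _).1 (htwo 1 hp₂)⟩

section Words

variable {α : Type*}

theorem SquareFree.take {w : List α} (hw : SquareFree w) (m : ℕ) : SquareFree (w.take m) := by
  intro x y z h
  apply hw x y (z ++ w.drop m)
  conv_lhs => rw [← List.take_append_drop m w]
  simp [h]

theorem SquareFree.drop {w : List α} (hw : SquareFree w) (m : ℕ) : SquareFree (w.drop m) := by
  intro x y z h
  apply hw (w.take m ++ x) y z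
  conv_lhs => rw [← List.take_append_drop m w]
  simp [h]

theorem squareFree_map_range {f : ℕ → α} (hf : ∀ i p, 0 < p → ¬HasPeriodOn f p i p)
    (n : ℕ) : SquareFree ((List.range n).map f) := by
  intro x y z hw
  by_contra hy
  refine hf x.length y.length (List.length_pos_iff.mpr hy) fun j hj => ?_
  have hlen := congrArg List.length hw
  simp only [List.length_map, List.length_range, List.length_append] at hlen
  have h₁ := congrArg (·[x.length + j]?) hw
  have h₂ := congrArg (·[x.length + (y.length + j)]?) hw
  simp only [List.length_map, List.length_range, show x.length + j < n by omega,
    show x.length + (y.length + j) < n by omega, getElem?_pos, List.getElem_map,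
    List.getElem_range, List.append_assoc, le_add_iff_nonneg_right, zero_le,
    List.getElem?_append_right, add_tsub_cancel_left, hj, List.getElem?_append_left,
    Option.some.injEq] at h₁ h₂
  rw [h₁, ← h₂, add_assoc, add_comm j]

open Classical in
noncomputable def squareFreeWords (α : Type*) [Fintype α] (n : ℕ) : Finset (List α) :=
  (univ.image (List.ofFn : (Fin n → α) → List α)).filter SquareFree

theorem mem_squareFreeWords [Fintype α] {n : ℕ} {w : List α} :
    w ∈ squareFreeWords α n ↔ w.length = n ∧ SquareFree w := by
  simp only [squareFreeWords, mem_filter, mem_image, mem_univ, true_and]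
  constructor
  · rintro ⟨⟨f, rfl⟩, hw⟩
    exact ⟨List.length_ofFn, hw⟩
  · rintro ⟨rfl, hw⟩
    exact ⟨⟨fun i => w[i], List.ofFn_getElem⟩, hw⟩

theorem sum_squareFreeWords_add_le [Fintype α] (m n : ℕ) {g : List α → ℝ}
    (hg : ∀ v w, g (v ++ w) = g v * g w) (hg₀ : ∀ w, 0 ≤ g w) :
    ∑ w ∈ squareFreeWords α (m + n), g w ≤
      (∑ w ∈ squareFreeWords α m, g w) * ∑ w ∈ squareFreeWords α n, g w := by
  classical
  let split : List α → List α × List α := fun w => (w.take m, w.drop m)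
  have hsplit : ∀ w ∈ squareFreeWords α (m + n),
      split w ∈ squareFreeWords α m ×ˢ squareFreeWords α n := fun w hw => by
    obtain ⟨hlen, hw⟩ := mem_squareFreeWords.1 hw
    simp only [split, mem_product, mem_squareFreeWords, List.length_take,
      List.length_drop, hlen]
    exact ⟨⟨by omega, hw.take m⟩, ⟨by omega, hw.drop m⟩⟩
  have hinj : Set.InjOn split (squareFreeWords α (m + n)) := fun v _ w _ h => by
    rw [← List.take_append_drop m v, ← List.take_append_drop m w]
    exact congrArg₂ (· ++ ·) (congrArg Prod.fst h) (congrArg Prod.snd h)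
  rw [sum_mul_sum, ← sum_product']
  calc ∑ w ∈ squareFreeWords α (m + n), g w
      = ∑ w ∈ squareFreeWords α (m + n), g (split w).1 * g (split w).2 :=
        sum_congr rfl fun w _ => by rw [← hg, List.take_append_drop]
    _ = ∑ p ∈ (squareFreeWords α (m + n)).image split, g p.1 * g p.2 :=
        (sum_image (f := fun p => g p.1 * g p.2) hinj).symm
    _ ≤ _ := sum_le_sum_of_subset_of_nonneg (image_subset_iff.2 hsplit)
        fun p _ _ => mul_nonneg (hg₀ p.1) (hg₀ p.2)

end Words

theorem exists_squareFree_ternary (n : ℕ) : ∃ w : List (Fin 3), w.length = n ∧ SquareFree w :=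
  ⟨(List.range n).map ternaryThueMorse, by simp,
    squareFree_map_range (fun _ _ hp => ternaryThueMorse_squareFree hp _) n⟩

theorem s2_eq_card (n k : ℕ) :
    s2 n k = #{w ∈ squareFreeWords (Fin 3) n | w.count 0 = k} :=
  Nat.subtype_card _ fun w => by simp [mem_squareFreeWords, and_assoc]

theorem sPoly_eq_sum (n : ℕ) (q : ℝ) :
    sPoly n q = ∑ w ∈ squareFreeWords (Fin 3) n, q ^ w.count 0 := by
  have hcount : ∀ w ∈ squareFreeWords (Fin 3) n, w.count 0 ∈ range (n + 1) := fun w hw => by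
    rw [mem_range, Nat.lt_succ_iff, ← (mem_squareFreeWords.1 hw).1]
    exact List.count_le_length
  rw [sPoly, ← sum_fiberwise_of_maps_to hcount]
  refine sum_congr rfl fun k _ => ?_
  rw [s2_eq_card, sum_congr rfl fun w hw => by rw [(mem_filter.1 hw).2],
    sum_const, nsmul_eq_mul]

theorem min_one_pow_le_sPoly (n : ℕ) {q : ℝ} (hq : 0 < q) : min 1 q ^ n ≤ sPoly n q := by
  obtain ⟨w, hlen, hw⟩ := exists_squareFree_ternary n
  have hmin : 0 ≤ min 1 q := le_min zero_le_one hq.le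
  rw [sPoly_eq_sum]
  calc min 1 q ^ n ≤ min 1 q ^ w.count 0 :=
        pow_le_pow_of_le_one hmin (min_le_left _ _) (hlen ▸ List.count_le_length)
    _ ≤ q ^ w.count 0 := pow_le_pow_left₀ hmin (min_le_right _ _) _
    _ ≤ _ := single_le_sum (fun v _ => pow_nonneg hq.le _)
        (mem_squareFreeWords.2 ⟨hlen, hw⟩)

theorem sPoly_pos (n : ℕ) {q : ℝ} (hq : 0 < q) : 0 < sPoly n q :=
  (pow_pos (lt_min one_pos hq) n).trans_le (min_one_pow_le_sPoly n hq)

theorem sPoly_add_le_mul (m n : ℕ) {q : ℝ} (hq : 0 ≤ q) :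
    sPoly (m + n) q ≤ sPoly m q * sPoly n q := by
  simp only [sPoly_eq_sum]
  exact sum_squareFreeWords_add_le m n (fun v w => by rw [List.count_append, pow_add])
    fun _ => pow_nonneg hq _

open Real Filter Topology

theorem Subadditive.lim_eq_iInf {u : ℕ → ℝ} (h : Subadditive u) :
    h.lim = ⨅ n : {m : ℕ // 1 ≤ m}, u n / n := by
  rw [Subadditive.lim, Set.image_eq_range]
  rfl

theorem Real.sum_rpow_mul_rpow_le {ι : Type*} (s : Finset ι) {f g : ι → ℝ}
    (hf : ∀ i ∈ s, 0 ≤ f i) (hg : ∀ i ∈ s, 0 ≤ g i) {a b : ℝ} (ha : 0 < a)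
    (hb : 0 < b) (hab : a + b = 1) :
    ∑ i ∈ s, f i ^ a * g i ^ b ≤ (∑ i ∈ s, f i) ^ a * (∑ i ∈ s, g i) ^ b := by
  have h := inner_le_Lp_mul_Lq_of_nonneg s (Real.HolderConjugate.inv_inv ha hb hab)
    (fun i hi => rpow_nonneg (hf i hi) a) (fun i hi => rpow_nonneg (hg i hi) b)
  rwa [sum_congr rfl fun i hi => rpow_rpow_inv (hf i hi) ha.ne',
    sum_congr rfl fun i hi => rpow_rpow_inv (hg i hi) hb.ne', one_div, inv_inv, one_div,
    inv_inv] at h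

theorem convexOn_log_sum_exp_mul {ι : Type*} {s : Finset ι} (hs : s.Nonempty) (c : ι → ℝ) :
    ConvexOn ℝ Set.univ fun t => log (∑ i ∈ s, exp (t * c i)) := by
  refine convexOn_iff_forall_pos.2 ⟨convex_univ, fun x _ y _ a b ha hb hab => ?_⟩
  have hpos : ∀ t, 0 < ∑ i ∈ s, exp (t * c i) := fun t => sum_pos (fun i _ => exp_pos _) hs
  calc log (∑ i ∈ s, exp ((a • x + b • y) * c i))
      = log (∑ i ∈ s, exp (x * c i) ^ a * exp (y * c i) ^ b) := by
        simp only [← exp_mul, ← exp_add, smul_eq_mul]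
        ring_nf
    _ ≤ log ((∑ i ∈ s, exp (x * c i)) ^ a * (∑ i ∈ s, exp (y * c i)) ^ b) :=
        log_le_log (sum_pos (fun i _ => by positivity) hs)
          (sum_rpow_mul_rpow_le s (fun i _ => (exp_pos _).le) (fun i _ => (exp_pos _).le)
            ha hb hab)
    _ = a • log (∑ i ∈ s, exp (x * c i)) + b • log (∑ i ∈ s, exp (y * c i)) := by
        rw [log_mul (rpow_pos_of_pos (hpos x) a).ne' (rpow_pos_of_pos (hpos y) b).ne',
          log_rpow (hpos x), log_rpow (hpos y), smul_eq_mul, smul_eq_mul]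

theorem convexOn_of_tendsto {E ι : Type*} [AddCommMonoid E] [SMul ℝ E] {l : Filter ι} [l.NeBot]
    {s : Set E} {f : ι → E → ℝ} {g : E → ℝ} (hf : ∀ᶠ n in l, ConvexOn ℝ s (f n))
    (hfg : ∀ x, Tendsto (fun n => f n x) l (𝓝 (g x))) : ConvexOn ℝ s g :=
  isClosed_setOfPred_convexOn.mem_of_tendsto (tendsto_pi_nhds.2 hfg) hf

noncomputable def freeEnergy (q : ℝ) : ℝ :=
  ⨅ n : {m : ℕ // 1 ≤ m}, log (sPoly n q) / n

theorem subadditive_log_sPoly {q : ℝ} (hq : 0 < q) :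
    Subadditive fun n => log (sPoly n q) := fun m n => by
  rw [← log_mul (sPoly_pos m hq).ne' (sPoly_pos n hq).ne']
  exact log_le_log (sPoly_pos _ hq) (sPoly_add_le_mul m n hq.le)

theorem log_min_one_le_log_sPoly_div (n : ℕ) {q : ℝ} (hq : 0 < q) :
    log (min 1 q) ≤ log (sPoly n q) / n := by
  have hmin : 0 < min 1 q := lt_min one_pos hq
  have hlog : log (min 1 q) ≤ 0 := log_nonpos hmin.le (min_le_left _ _)
  rcases Nat.eq_zero_or_pos n with rfl | hn
  · simpa using hlog
  rw [le_div_iff₀ (by positivity), mul_comm, ← log_pow]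
  exact log_le_log (pow_pos hmin n) (min_one_pow_le_sPoly n hq)

theorem tendsto_log_sPoly_div {q : ℝ} (hq : 0 < q) :
    Tendsto (fun n : ℕ => log (sPoly n q) / n) atTop (𝓝 (freeEnergy q)) := by
  rw [freeEnergy, ← (subadditive_log_sPoly hq).lim_eq_iInf]
  exact (subadditive_log_sPoly hq).tendsto_lim
    ⟨_, Set.forall_mem_range.2 fun n => log_min_one_le_log_sPoly_div n hq⟩

theorem convexOn_log_sPoly_exp_div (n : ℕ) :
    ConvexOn ℝ Set.univ fun t => log (sPoly n (exp t)) / n := by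
  obtain ⟨w, hw⟩ := exists_squareFree_ternary n
  have hsum : ∀ t, sPoly n (exp t) = ∑ w ∈ squareFreeWords (Fin 3) n, exp (t * w.count 0) :=
    fun t => by simp only [sPoly_eq_sum, mul_comm t, exp_nat_mul]
  simp only [hsum, div_eq_inv_mul, ← smul_eq_mul]
  exact (convexOn_log_sum_exp_mul ⟨w, mem_squareFreeWords.2 hw⟩ _).smul (by positivity)

/-- For every real `q > 0`, the free energy `F(q) = lim (1/n) log s_n(q)` of
ternary square-free words exists (as a finite real number), equals
`inf_{n ≥ 1} (1/n) log s_n(q)`, and `t ↦ F(exp t)` is convex on `ℝ`. -/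
theorem ternary_squareFree_free_energy_exists :
    ∃ F : ℝ → ℝ,
      (∀ q : ℝ, 0 < q →
        Filter.Tendsto (fun n : ℕ => Real.log (sPoly n q) / n) Filter.atTop
          (nhds (F q))) ∧
      (∀ q : ℝ, 0 < q →
        F q = ⨅ n : {m : ℕ // 1 ≤ m}, Real.log (sPoly n.1 q) / n.1) ∧
      ConvexOn ℝ Set.univ (fun t : ℝ => F (Real.exp t)) :=
  ⟨freeEnergy, fun _ hq => tendsto_log_sPoly_div hq, fun _ _ => rfl,
    convexOn_of_tendsto (Eventually.of_forall convexOn_log_sPoly_exp_div)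
      fun t => tendsto_log_sPoly_div (exp_pos t)⟩
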